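/- arXiv:1406.0238 — 4 statements merged into one kernel-verified Lean document; each statement's English description precedes it below -/
import Mathlib

section
/- Let $\hat{Z} = \cup_{c=1}^C \hat{Z}^{(c)}$ be a $(C,\tau)$-distributed sampling over a balanced partition $P^{(1)},\dots,P^{(C)}$ of $[n]$ into sets of size $s = n/C$. Pick $J \subseteq [n]$ with $|P^{(c)} \cap J| = \xi$ for some $\xi \geq 1$ and all $c$. Let $\kappa(m, i)$ be any real-valued function of an integer $m$ and index $i \in [n]$. Then $\mathbb{E}\left[\sum_{i \in \hat{Z} \cap J} \kappa(|\hat{Z} \cap J|, i)\right] = \mathbb{E}\left[\frac{|\hat{Z} \cap J|}{C\xi} \sum_{i \in J} \kappa(|\hat{Z} \cap J|, i)\right]$. -/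
/-!
Swap the two sums, so that it suffices to fix `i ∈ J`, lying in the part `c`. Two kinds of
symmetry of the sampling preserve `|Ẑ ∩ J|`: a transposition of two elements of `P c ∩ J`, and,
because all parts have the same size and meet `J` in the same number of points, a permutation of
`[n]` preserving `J` that exchanges two parts. The first shows that `i` may be replaced by any
of the `ξ` elements of `P c ∩ J`, so the indicator of `i ∈ Ẑ` averages to `|Ẑ^{(c)} ∩ J| / ξ`;
the second shows that all `C` parts contribute alike, so `|Ẑ^{(c)} ∩ J|` averages to
`|Ẑ ∩ J| / C`.
-/

open Finset

theorem Equiv.Perm.exists_apply_eq_of_card_fiber {α κ : Type*} [Fintype α] [DecidableEq κ]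
    (f : α → κ) (π : Equiv.Perm κ) (h : ∀ k, #{x | f x = π k} = #{x | f x = k}) :
    ∃ σ : Equiv.Perm α, ∀ x, f (σ x) = π (f x) := by
  have e : ∀ k, {x // f x = k} ≃ {x // π.symm (f x) = k} := fun k =>
    Fintype.equivOfCardEq <| by
      simp only [Fintype.card_subtype, Equiv.symm_apply_eq, h]
  exact ⟨Equiv.ofFiberEquiv e, fun x => π.symm_apply_eq.1 (Equiv.ofFiberEquiv_map e x)⟩

section Partition

variable {α ι : Type*} {P : ι → Finset α} {part : α → ι}

theorem exists_forall_mem_iff_eq [Fintype α] [DecidableEq α] [Fintype ι]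
    (hcover : univ = univ.biUnion P) (hdisj : ∀ c c', c ≠ c' → Disjoint (P c) (P c')) :
    ∃ part : α → ι, ∀ x d, x ∈ P d ↔ part x = d := by
  have hmem : ∀ x, ∃ d, x ∈ P d := fun x => by
    have hx : x ∈ univ.biUnion P := hcover ▸ mem_univ x
    simpa using hx
  choose part hpart using hmem
  refine ⟨part, fun x d => ⟨fun hx => ?_, fun h => h ▸ hpart x⟩⟩
  by_contra hne
  exact disjoint_left.1 (hdisj _ _ hne) (hpart x) hx

theorem map_eq_of_part_apply (hP : ∀ x d, x ∈ P d ↔ part x = d) {σ : Equiv.Perm α}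
    {π : Equiv.Perm ι} (hσ : ∀ x, part (σ x) = π (part x)) (d : ι) :
    (P d).map σ.toEmbedding = P (π d) := by
  ext y
  rw [mem_map_equiv, hP, hP, ← π.apply_eq_iff_eq, ← hσ, Equiv.apply_symm_apply]

theorem mem_biUnion_iff_mem_part [Fintype ι] [DecidableEq α]
    (hP : ∀ x d, x ∈ P d ↔ part x = d) {Z : ι → Finset α} (hZ : ∀ d, Z d ⊆ P d) (x : α) :
    x ∈ univ.biUnion Z ↔ x ∈ Z (part x) := by
  simp only [mem_biUnion, mem_univ, true_and]
  exact ⟨fun ⟨d, hd⟩ => (hP x d).1 (hZ d hd) ▸ hd, fun h => ⟨_, h⟩⟩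

theorem card_biUnion_inter_eq_sum [Fintype ι] [DecidableEq α]
    (hP : ∀ x d, x ∈ P d ↔ part x = d) {Z : ι → Finset α} (hZ : ∀ d, Z d ⊆ P d)
    (J : Finset α) : #(univ.biUnion Z ∩ J) = ∑ d, #(Z d ∩ J) := by
  rw [biUnion_inter, card_biUnion]
  intro c _ d _ hcd
  refine disjoint_left.2 fun x hxc hxd => hcd ?_
  rw [← (hP x c).1 (hZ c (mem_inter.1 hxc).1), ← (hP x d).1 (hZ d (mem_inter.1 hxd).1)]

theorem exists_perm_part_apply [Fintype α] [DecidableEq α] {J : Finset α} {s ξ : ℕ}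
    (hP : ∀ x d, x ∈ P d ↔ part x = d) (hsize : ∀ d, #(P d) = s)
    (hξ : ∀ d, #(P d ∩ J) = ξ) (π : Equiv.Perm ι) :
    ∃ σ : Equiv.Perm α, (∀ x, part (σ x) = π (part x)) ∧ ∀ x, σ x ∈ J ↔ x ∈ J := by
  classical
  have hfiber : ∀ d b, #{x | (part x, decide (x ∈ J)) = (d, b)} = if b then ξ else s - ξ := by
    intro d b
    have hsplit := card_filter_add_card_filter_not (s := P d) (· ∈ J)
    rw [filter_mem_eq_inter, hsize, hξ] at hsplit
    have hfilter : ({x | (part x, decide (x ∈ J)) = (d, b)} : Finset α)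
        = {x ∈ P d | decide (x ∈ J) = b} := by
      ext x; simp [Prod.ext_iff, hP]
    rw [hfilter]
    cases b
    · simp only [Bool.false_eq_true, ↓reduceIte, decide_eq_false_iff_not]
      omega
    · simp only [decide_eq_true_eq, ↓reduceIte, filter_mem_eq_inter, hξ]
  obtain ⟨σ, hσ⟩ := Equiv.Perm.exists_apply_eq_of_card_fiber
    (fun x => (part x, decide (x ∈ J))) (π.prodCongr (Equiv.refl Bool)) <| by
      rintro ⟨d, b⟩
      simp only [Equiv.prodCongr_apply, Prod.map, Equiv.refl_apply, hfiber]
  exact ⟨σ, fun x => congrArg Prod.fst (hσ x), fun x => by simpa using congrArg Prod.snd (hσ x)⟩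

end Partition

section PermInter

variable {α ι : Type*} [DecidableEq α] {J : Finset α}

theorem card_map_inter_of_forall_mem_iff (σ : Equiv.Perm α) (hJ : ∀ x, σ x ∈ J ↔ x ∈ J)
    (T : Finset α) : #(T.map σ.toEmbedding ∩ J) = #(T ∩ J) := by
  have hmap : T.map σ.toEmbedding ∩ J = (T ∩ J).map σ.toEmbedding := by
    ext y
    simp only [mem_inter, mem_map_equiv, ← hJ (σ.symm y), Equiv.apply_symm_apply]
  rw [hmap, card_map]

theorem card_biUnion_perm_inter [Fintype ι] (σ : Equiv.Perm α) (π : Equiv.Perm ι)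
    (hJ : ∀ x, σ x ∈ J ↔ x ∈ J) (Z : ι → Finset α) :
    #(univ.biUnion (fun d => (Z (π.symm d)).map σ.toEmbedding) ∩ J)
      = #(univ.biUnion Z ∩ J) := by
  have hunion : univ.biUnion (fun d => (Z (π.symm d)).map σ.toEmbedding)
      = (univ.biUnion Z).map σ.toEmbedding := by
    ext y
    simp only [mem_biUnion, mem_univ, true_and, mem_map_equiv]
    exact (π.symm.surjective.exists (p := fun d => σ.symm y ∈ Z d)).symm
  rw [hunion, card_map_inter_of_forall_mem_iff σ hJ]

end PermInter

section DistributedSampling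

variable {α ι : Type*} [Fintype ι] [DecidableEq ι]

def distributedSamples (P : ι → Finset α) (τ : ℕ) : Finset (ι → Finset α) :=
  Fintype.piFinset fun d => (P d).powersetCard τ

variable {P : ι → Finset α} {τ : ℕ}

theorem mem_distributedSamples {Z : ι → Finset α} :
    Z ∈ distributedSamples P τ ↔ ∀ d, Z d ⊆ P d ∧ #(Z d) = τ := by
  simp [distributedSamples]

theorem sum_distributedSamples_perm {M : Type*} [AddCommMonoid M] (σ : Equiv.Perm α)
    (π : Equiv.Perm ι) (hσ : ∀ d, (P d).map σ.toEmbedding = P (π d))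
    (F : (ι → Finset α) → M) :
    ∑ Z ∈ distributedSamples P τ, F (fun d => (Z (π.symm d)).map σ.toEmbedding)
      = ∑ Z ∈ distributedSamples P τ, F Z := by
  refine Finset.sum_equiv (π.arrowCongr σ.finsetCongr) (fun Z => ?_) (fun Z _ => rfl)
  simp only [mem_distributedSamples, Equiv.arrowCongr_apply, Function.comp_apply,
    Equiv.finsetCongr_apply]
  conv_rhs => rw [← π.forall_congr_right]
  simp only [Equiv.symm_apply_apply, ← hσ, map_subset_map, card_map]

variable [DecidableEq α] {J : Finset α} {part : α → ι} {M : Type*} [AddCommMonoid M]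

theorem sum_ite_mem_eq_of_part_eq (hP : ∀ x d, x ∈ P d ↔ part x = d) {i j : α}
    (hi : i ∈ J) (hj : j ∈ J) (hij : part i = part j) (c : ι) (g : ℕ → M) :
    ∑ Z ∈ distributedSamples P τ, (if i ∈ Z c then g #(univ.biUnion Z ∩ J) else 0)
      = ∑ Z ∈ distributedSamples P τ, (if j ∈ Z c then g #(univ.biUnion Z ∩ J) else 0) := by
  have hJ : ∀ x, Equiv.swap i j x ∈ J ↔ x ∈ J := fun x =>
    iff_of_eq (Equiv.apply_swap_eq_self (v := (· ∈ J)) (propext (iff_of_true hi hj)) x)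
  rw [← sum_distributedSamples_perm (Equiv.swap i j) (Equiv.refl ι)
    (map_eq_of_part_apply hP (Equiv.apply_swap_eq_self hij))]
  refine sum_congr rfl fun Z _ => ?_
  rw [card_biUnion_perm_inter _ _ hJ]
  simp only [Equiv.refl_symm, Equiv.refl_apply, mem_map_equiv, Equiv.symm_swap,
    Equiv.swap_apply_left]

theorem sum_card_inter_smul_eq [Fintype α] {s ξ : ℕ} (hP : ∀ x d, x ∈ P d ↔ part x = d)
    (hsize : ∀ d, #(P d) = s) (hξ : ∀ d, #(P d ∩ J) = ξ) (c c' : ι) (g : ℕ → M) :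
    ∑ Z ∈ distributedSamples P τ, #(Z c ∩ J) • g #(univ.biUnion Z ∩ J)
      = ∑ Z ∈ distributedSamples P τ, #(Z c' ∩ J) • g #(univ.biUnion Z ∩ J) := by
  obtain ⟨σ, hσ, hJ⟩ := exists_perm_part_apply hP hsize hξ (Equiv.swap c c')
  rw [← sum_distributedSamples_perm σ _ (map_eq_of_part_apply hP hσ)]
  refine sum_congr rfl fun Z _ => ?_
  rw [card_biUnion_perm_inter _ _ hJ, card_map_inter_of_forall_mem_iff σ hJ, Equiv.symm_swap,
    Equiv.swap_apply_left]

theorem sum_card_inter_smul_eq_card_smul (hP : ∀ x d, x ∈ P d ↔ part x = d) {i : α}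
    (hi : i ∈ J) (g : ℕ → M) :
    ∑ Z ∈ distributedSamples P τ, #(Z (part i) ∩ J) • g #(univ.biUnion Z ∩ J)
      = #(P (part i) ∩ J) • ∑ Z ∈ distributedSamples P τ,
          (if i ∈ Z (part i) then g #(univ.biUnion Z ∩ J) else 0) := by
  have hcount : ∀ Z ∈ distributedSamples P τ, #(Z (part i) ∩ J) • g #(univ.biUnion Z ∩ J)
      = ∑ j ∈ P (part i) ∩ J, if j ∈ Z (part i) then g #(univ.biUnion Z ∩ J) else 0 := by
    intro Z hZ
    rw [sum_ite_mem, sum_const, inter_right_comm,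
      inter_eq_right.2 ((mem_distributedSamples.1 hZ _).1), inter_comm]
  rw [sum_congr rfl hcount, sum_comm, ← sum_const]
  refine sum_congr rfl fun j hj => ?_
  obtain ⟨hjP, hjJ⟩ := mem_inter.1 hj
  exact sum_ite_mem_eq_of_part_eq hP hjJ hi ((hP j _).1 hjP) _ g

theorem card_mul_smul_sum_ite_mem_biUnion [Fintype α] {s ξ : ℕ}
    (hP : ∀ x d, x ∈ P d ↔ part x = d) (hsize : ∀ d, #(P d) = s)
    (hξ : ∀ d, #(P d ∩ J) = ξ) {i : α} (hi : i ∈ J) (g : ℕ → M) :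
    (Fintype.card ι * ξ) • ∑ Z ∈ distributedSamples P τ,
        (if i ∈ univ.biUnion Z then g #(univ.biUnion Z ∩ J) else 0)
      = ∑ Z ∈ distributedSamples P τ, #(univ.biUnion Z ∩ J) • g #(univ.biUnion Z ∩ J) := by
  symm
  calc ∑ Z ∈ distributedSamples P τ, #(univ.biUnion Z ∩ J) • g #(univ.biUnion Z ∩ J)
      = ∑ Z ∈ distributedSamples P τ, ∑ d, #(Z d ∩ J) • g #(univ.biUnion Z ∩ J) :=
        sum_congr rfl fun Z hZ => by
          rw [card_biUnion_inter_eq_sum hP (fun d => (mem_distributedSamples.1 hZ d).1), sum_smul]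
    _ = ∑ d, ∑ Z ∈ distributedSamples P τ, #(Z d ∩ J) • g #(univ.biUnion Z ∩ J) := sum_comm
    _ = ∑ d : ι, ∑ Z ∈ distributedSamples P τ,
          #(Z (part i) ∩ J) • g #(univ.biUnion Z ∩ J) :=
        sum_congr rfl fun d _ => sum_card_inter_smul_eq hP hsize hξ d (part i) g
    _ = Fintype.card ι • ξ • ∑ Z ∈ distributedSamples P τ,
          (if i ∈ Z (part i) then g #(univ.biUnion Z ∩ J) else 0) := by
        rw [sum_const, card_univ, sum_card_inter_smul_eq_card_smul hP hi, hξ]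
    _ = _ := by
        rw [mul_smul]
        refine congrArg _ (congrArg _ (sum_congr rfl fun Z hZ => if_congr ?_ rfl rfl))
        exact (mem_biUnion_iff_mem_part hP (fun d => (mem_distributedSamples.1 hZ d).1) i).symm

end DistributedSampling

theorem distributed_sampling_identity_general
    (n C s τ ξ : ℕ) (P : Fin C → Finset (Fin n)) (J : Finset (Fin n))
    (κ : ℕ → Fin n → ℝ)
    (hpart : Finset.univ = Finset.univ.biUnion P)
    (hdisj : ∀ c c' : Fin C, c ≠ c' → Disjoint (P c) (P c'))
    (hsize : ∀ c, (P c).card = s)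
    (hξ : ∀ c, (P c ∩ J).card = ξ) :
    (∑ Z ∈ Fintype.piFinset (fun c : Fin C => (P c).powersetCard τ),
        ∑ i ∈ (Finset.univ.biUnion Z) ∩ J, κ ((Finset.univ.biUnion Z ∩ J).card) i)
      / ((Fintype.piFinset (fun c : Fin C => (P c).powersetCard τ)).card : ℝ)
    = (∑ Z ∈ Fintype.piFinset (fun c : Fin C => (P c).powersetCard τ),
        ((Finset.univ.biUnion Z ∩ J).card : ℝ) / ((C : ℝ) * ξ)
          * ∑ i ∈ J, κ ((Finset.univ.biUnion Z ∩ J).card) i)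
      / ((Fintype.piFinset (fun c : Fin C => (P c).powersetCard τ)).card : ℝ) := by
  obtain ⟨part, hP⟩ := exists_forall_mem_iff_eq hpart hdisj
  congr 1
  have hLHS : ∀ Z : Fin C → Finset (Fin n),
      ∑ i ∈ univ.biUnion Z ∩ J, κ #(univ.biUnion Z ∩ J) i
        = ∑ i ∈ J, if i ∈ univ.biUnion Z then κ #(univ.biUnion Z ∩ J) i else 0 := fun Z => by
    rw [sum_ite_mem, inter_comm]
  simp_rw [hLHS, mul_sum]
  refine (sum_comm.trans (sum_congr rfl fun i hi => ?_)).trans sum_comm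
  have key := card_mul_smul_sum_ite_mem_biUnion (τ := τ) hP hsize hξ hi (κ · i)
  have hCξ : (C : ℝ) * ξ ≠ 0 := by
    have hC : 0 < C := Fin.pos (part i)
    have hξ0 : 0 < ξ := hξ (part i) ▸ card_pos.2 ⟨i, mem_inter.2 ⟨(hP i _).2 rfl, hi⟩⟩
    positivity
  simp only [distributedSamples, Fintype.card_fin, nsmul_eq_mul, Nat.cast_mul] at key
  calc _ = ((C : ℝ) * ξ)⁻¹ * ((C * ξ) * _) := (inv_mul_cancel_left₀ hCξ _).symm
    _ = _ := by
      rw [key, mul_sum]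
      exact sum_congr rfl fun Z _ => by ring

/-- The key identity for `(C,τ)`-distributed samplings.  `[n]` is partitioned into `C`
balanced parts `P c` of size `s = n / C`; `Z c` is an independent uniformly random
`τ`-subset of `P c`, and `Ẑ = ⋃ c, Z c`.  If `J ⊆ [n]` satisfies `|P c ∩ J| = ξ ≥ 1`
for all `c`, then for any function `κ` of `|Ẑ ∩ J|` and `i`:
`E[∑_{i ∈ Ẑ ∩ J} κ(|Ẑ ∩ J|, i)] = E[(|Ẑ ∩ J| / (C ξ)) ∑_{i ∈ J} κ(|Ẑ ∩ J|, i)]`. -/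
theorem distributed_sampling_identity
    (n C s τ ξ : ℕ) (P : Fin C → Finset (Fin n)) (J : Finset (Fin n))
    (κ : ℕ → Fin n → ℝ)
    (hpart : Finset.univ = Finset.univ.biUnion P)
    (hdisj : ∀ c c' : Fin C, c ≠ c' → Disjoint (P c) (P c'))
    (hsize : ∀ c, (P c).card = s) (hn : n = C * s)
    (hτ1 : 1 ≤ τ) (hτs : τ ≤ s)
    (hξ : ∀ c, (P c ∩ J).card = ξ) (hξ1 : 1 ≤ ξ) :
    (∑ Z ∈ Fintype.piFinset (fun c : Fin C => (P c).powersetCard τ),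
        ∑ i ∈ (Finset.univ.biUnion Z) ∩ J, κ ((Finset.univ.biUnion Z ∩ J).card) i)
      / ((Fintype.piFinset (fun c : Fin C => (P c).powersetCard τ)).card : ℝ)
    = (∑ Z ∈ Fintype.piFinset (fun c : Fin C => (P c).powersetCard τ),
        ((Finset.univ.biUnion Z ∩ J).card : ℝ) / ((C : ℝ) * ξ)
          * ∑ i ∈ J, κ ((Finset.univ.biUnion Z ∩ J).card) i)
      / ((Fintype.piFinset (fun c : Fin C => (P c).powersetCard τ)).card : ℝ) :=
  distributed_sampling_identity_general n C s τ ξ P J κ hpart hdisj hsize hξ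
end

section
/- Let $\phi: \mathbb{R}^N \to \mathbb{R}$ be convex with $\phi(0) = 0$ and $\phi \geq 0$, and suppose $\phi(U_i t) \leq \frac{L_i}{2}\|t\|_{(i)}^2$ for all $i \in [n]$ and $t \in \mathbb{R}^{N_i}$. If $\phi$ depends only on blocks in $J \subseteq [n]$, and $\hat{Z}$ is a $(C,\tau)$-distributed sampling with $|P^{(c)} \cap J| = \xi \geq 1$ for all $c$, then $\mathbb{E}[\phi(h_{[\hat{Z}]})] \leq \frac{1}{2C\xi}\,\mathbb{E}[|\hat{Z} \cap J|^2]\, \|h\|_L^2$ for all $h \in \mathbb{R}^N$, where $\|h\|_L^2 = \sum_i L_i \|h^{(i)}\|_{(i)}^2$. -/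
/-!
Jensen's inequality with equal weights, together with the bounds on the block directions,
gives `φ(h_[S]) ≤ |S|/2 · ∑_{i ∈ S} L_i ‖h⁽ⁱ⁾‖²`; since `φ` only sees the blocks in `J`, this
applies with `S = Ẑ ∩ J`. Exchanging sums, the expectation of the right-hand side becomes
`∑_{i ∈ J} L_i ‖h⁽ⁱ⁾‖² · E[|Ẑ ∩ J| 1_{i ∈ Ẑ}] / 2`. The weight `E[|Ẑ ∩ J| 1_{i ∈ Ẑ}]` is a sum of
pair counts `#{Ẑ ∋ i, j}`, which factor over the parts and only depend on whether `j = i`, `j`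
lies in the part of `i`, or elsewhere; hence it is the same for all `i ∈ J`, and summing over
`J` (of size `Cξ`) identifies it as `E[|Ẑ ∩ J|²] / (Cξ)`.
-/

open Finset Function

theorem ConvexOn.map_sum_le_inv_card_mul_sum {ι E : Type*} [AddCommGroup E] [Module ℝ E]
    {φ : E → ℝ} (hφ : ConvexOn ℝ Set.univ φ) {S : Finset ι} (hS : S.Nonempty) (v : ι → E) :
    φ (∑ i ∈ S, v i) ≤ (#S : ℝ)⁻¹ * ∑ i ∈ S, φ ((#S : ℝ) • v i) := by
  have hcard : (#S : ℝ) ≠ 0 := by exact_mod_cast hS.card_ne_zero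
  have hw : ∑ _i ∈ S, (#S : ℝ)⁻¹ = 1 := by simp [hcard]
  have := hφ.map_sum_le (fun _ _ => inv_nonneg.2 (Nat.cast_nonneg _)) hw
    (fun i _ => Set.mem_univ ((#S : ℝ) • v i))
  simpa [smul_smul, inv_mul_cancel₀ hcard, mul_sum] using this

section DoubleCounting

variable {ι β R : Type*} [DecidableEq ι] [CommSemiring R] (Ω : Finset β) (X : β → Finset ι)
  (J : Finset ι)

theorem sum_filter_mem_card_inter (i : ι) :
    ∑ Z ∈ Ω with i ∈ X Z, #(X Z ∩ J) = ∑ j ∈ J, #{Z ∈ Ω | {i, j} ⊆ X Z} := by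
  simp_rw [insert_subset_iff, singleton_subset_iff, ← filter_filter,
    card_filter _ (Ω.filter _), inter_comm _ J, ← filter_mem_eq_inter, card_filter]
  exact sum_comm

theorem sum_card_inter_mul_sum_eq {N : ℕ}
    (hN : ∀ i ∈ J, ∑ Z ∈ Ω with i ∈ X Z, #(X Z ∩ J) = N) (a : ι → R) :
    ∑ Z ∈ Ω, (#(X Z ∩ J) : R) * ∑ i ∈ X Z ∩ J, a i = N * ∑ i ∈ J, a i := by
  calc ∑ Z ∈ Ω, (#(X Z ∩ J) : R) * ∑ i ∈ X Z ∩ J, a i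
      = ∑ i ∈ J, (∑ Z ∈ Ω with i ∈ X Z, (#(X Z ∩ J) : R)) * a i := by
        simp_rw [inter_comm _ J, ← filter_mem_eq_inter, sum_filter, mul_sum, sum_mul]
        rw [sum_comm]
        refine sum_congr rfl fun i _ => sum_congr rfl fun Z _ => ?_
        split_ifs <;> simp
    _ = N * ∑ i ∈ J, a i := by
        rw [mul_sum]
        refine sum_congr rfl fun i hi => ?_
        rw [← Nat.cast_sum, hN i hi]

end DoubleCounting

section Blocks

variable {ι : Type*} [DecidableEq ι] {E : ι → Type*} [∀ i, NormedAddCommGroup (E i)]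
  [∀ i, NormedSpace ℝ (E i)] {φ : (∀ i, E i) → ℝ} {L : ι → ℝ}

theorem ConvexOn.map_ite_mem_le (hφ : ConvexOn ℝ Set.univ φ) (hφ0 : φ 0 = 0)
    (hquad : ∀ i t, φ (Pi.single i t) ≤ L i / 2 * ‖t‖ ^ 2) (S : Finset ι) (h : ∀ i, E i) :
    φ (fun i => if i ∈ S then h i else 0) ≤ #S / 2 * ∑ i ∈ S, L i * ‖h i‖ ^ 2 := by
  rcases S.eq_empty_or_nonempty with rfl | hS
  · simpa [← Pi.zero_def] using hφ0.le
  have hsum : (fun i => if i ∈ S then h i else 0) = ∑ i ∈ S, Pi.single i (h i) := by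
    ext1 j; rw [Finset.sum_apply, sum_pi_single]
  calc φ (fun i => if i ∈ S then h i else 0)
      ≤ (#S : ℝ)⁻¹ * ∑ i ∈ S, φ (Pi.single i ((#S : ℝ) • h i)) := by
        simpa only [hsum, Pi.single_smul] using
          hφ.map_sum_le_inv_card_mul_sum hS fun i => Pi.single i (h i)
    _ ≤ (#S : ℝ)⁻¹ * ∑ i ∈ S, L i / 2 * ‖(#S : ℝ) • h i‖ ^ 2 := by
        gcongr with i; exact hquad i _
    _ = #S / 2 * ∑ i ∈ S, L i * ‖h i‖ ^ 2 := by
        have hcard : (#S : ℝ) ≠ 0 := by exact_mod_cast hS.card_ne_zero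
        simp only [norm_smul, Real.norm_natCast, mul_sum]
        refine sum_congr rfl fun i _ => ?_
        field_simp

theorem ConvexOn.sum_map_ite_mem_le {β : Type*} (hφ : ConvexOn ℝ Set.univ φ) (hφ0 : φ 0 = 0)
    (hquad : ∀ i t, φ (Pi.single i t) ≤ L i / 2 * ‖t‖ ^ 2) {J : Finset ι}
    (hdep : ∀ x y, (∀ i ∈ J, x i = y i) → φ x = φ y) {Ω : Finset β} {X : β → Finset ι} {N : ℕ}
    (hN : ∀ i ∈ J, ∑ Z ∈ Ω with i ∈ X Z, #(X Z ∩ J) = N) (h : ∀ i, E i) :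
    ∑ Z ∈ Ω, φ (fun i => if i ∈ X Z then h i else 0) ≤ N / 2 * ∑ i ∈ J, L i * ‖h i‖ ^ 2 :=
  calc _ ≤ ∑ Z ∈ Ω, (#(X Z ∩ J) : ℝ) / 2 * ∑ i ∈ X Z ∩ J, L i * ‖h i‖ ^ 2 := by
        refine sum_le_sum fun Z _ => ?_
        rw [hdep _ (fun i => if i ∈ X Z ∩ J then h i else 0) fun i hi => by simp [hi]]
        exact hφ.map_ite_mem_le hφ0 hquad _ h
    _ = N / 2 * ∑ i ∈ J, L i * ‖h i‖ ^ 2 := by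
        simp_rw [div_mul_eq_mul_div, ← sum_div, sum_card_inter_mul_sum_eq _ _ _ hN]

end Blocks

section Sampling

variable {ι κ : Type*} [DecidableEq ι] [Fintype κ]

theorem card_eq_card_mul_of_card_inter_eq {P : κ → Finset ι} (hcover : ∀ x, ∃ c, x ∈ P c)
    (hdisj : Pairwise (Disjoint on P)) {J : Finset ι} {ξ : ℕ} (hξ : ∀ c, #(P c ∩ J) = ξ) :
    #J = Fintype.card κ * ξ := by
  have hJ : J = univ.biUnion fun c => P c ∩ J := by
    ext x
    simpa using fun _ => hcover x
  rw [hJ, card_biUnion fun c _ c' _ h => (hdisj h).mono inter_subset_left inter_subset_left]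
  simp [hξ]

variable [DecidableEq κ]

theorem Fintype.card_filter_piFinset_forall {β : κ → Type*} (S : ∀ c, Finset (β c))
    (p : ∀ c, β c → Prop) [∀ c, DecidablePred (p c)] :
    #{Z ∈ Fintype.piFinset S | ∀ c, p c (Z c)} = ∏ c, #{T ∈ S c | p c T} := by
  rw [← Fintype.card_piFinset]
  congr 1
  ext Z
  simp [Fintype.mem_piFinset, forall_and]

theorem Fintype.prod_eq_prod_mul_pow_of_forall_notMem {M : Type*} [CommMonoid M] {S : Finset κ}
    {g : κ → M} {a : M} (h : ∀ c ∉ S, g c = a) :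
    ∏ c, g c = (∏ c ∈ S, g c) * a ^ (Fintype.card κ - #S) := by
  rw [← prod_mul_prod_compl S g, Finset.prod_congr rfl fun c hc => h c (mem_compl.1 hc),
    Finset.prod_const, card_compl]

-- Without the guard, `k > r` would give `(s - k).choose (r - k) = (s - k).choose 0 = 1`.
def supersetCount (s r k : ℕ) : ℕ := if k ≤ r then (s - k).choose (r - k) else 0

theorem card_filter_powersetCard_superset {A K : Finset ι} (hK : K ⊆ A) (r : ℕ) :
    #{T ∈ A.powersetCard r | K ⊆ T} = supersetCount #A r #K := by
  unfold supersetCount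
  split_ifs with hr
  · exact card_filter_powersetCard_subset K A r hK hr
  · refine card_eq_zero.2 (filter_eq_empty_iff.2 fun T hT hKT => hr ?_)
    exact (mem_powersetCard.1 hT).2 ▸ card_le_card hKT

/-- The `(C, τ)`-distributed sampling `Ẑ`, as the finset of its equally likely outcomes. -/
def distributedSampling (P : κ → Finset ι) (τ : ℕ) : Finset (κ → Finset ι) :=
  Fintype.piFinset fun c => (P c).powersetCard τ

variable {P : κ → Finset ι} {s τ : ℕ}

theorem subset_biUnion_iff_of_mem_distributedSampling (hcover : ∀ x, ∃ c, x ∈ P c)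
    (hdisj : Pairwise (Disjoint on P)) {Z : κ → Finset ι}
    (hZ : Z ∈ distributedSampling P τ) {B : Finset ι} :
    B ⊆ univ.biUnion Z ↔ ∀ c, B ∩ P c ⊆ Z c := by
  have hZP : ∀ c, Z c ⊆ P c := fun c => (mem_powersetCard.1 (Fintype.mem_piFinset.1 hZ c)).1
  constructor
  · intro hB c x hx
    obtain ⟨c', -, hxc'⟩ := mem_biUnion.1 (hB (mem_inter.1 hx).1)
    obtain rfl : c' = c := by
      by_contra hne
      exact (hdisj hne).notMem_of_mem_left_finset (hZP c' hxc') (mem_inter.1 hx).2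
    exact hxc'
  · intro hB x hx
    obtain ⟨c, hxc⟩ := hcover x
    exact mem_biUnion.2 ⟨c, mem_univ c, hB c (mem_inter.2 ⟨hx, hxc⟩)⟩

theorem card_filter_subset_biUnion (hcover : ∀ x, ∃ c, x ∈ P c)
    (hdisj : Pairwise (Disjoint on P)) (hsize : ∀ c, #(P c) = s) (B : Finset ι) :
    #{Z ∈ distributedSampling P τ | B ⊆ univ.biUnion Z}
      = ∏ c, supersetCount s τ #(B ∩ P c) := by
  rw [filter_congr fun Z hZ => subset_biUnion_iff_of_mem_distributedSampling hcover hdisj hZ,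
    distributedSampling, Fintype.card_filter_piFinset_forall]
  refine prod_congr rfl fun c _ => ?_
  rw [card_filter_powersetCard_superset inter_subset_right, hsize]

theorem card_filter_subset_biUnion_of_subset (hcover : ∀ x, ∃ c, x ∈ P c)
    (hdisj : Pairwise (Disjoint on P)) (hsize : ∀ c, #(P c) = s) {c₀ : κ} {B : Finset ι}
    (hB : B ⊆ P c₀) :
    #{Z ∈ distributedSampling P τ | B ⊆ univ.biUnion Z}
      = supersetCount s τ #B * supersetCount s τ 0 ^ (Fintype.card κ - 1) := by
  rw [card_filter_subset_biUnion hcover hdisj hsize,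
    Fintype.prod_eq_prod_mul_pow_of_forall_notMem (S := {c₀}) (a := supersetCount s τ 0),
    prod_singleton, inter_eq_left.2 hB, card_singleton]
  intro c hc
  rw [disjoint_iff_inter_eq_empty.1 ((hdisj (Ne.symm (notMem_singleton.1 hc))).mono_left hB),
    card_empty]

theorem card_filter_pair_subset_biUnion_of_ne (hcover : ∀ x, ∃ c, x ∈ P c)
    (hdisj : Pairwise (Disjoint on P)) (hsize : ∀ c, #(P c) = s) {c₀ c₁ : κ} {i j : ι}
    (hi : i ∈ P c₀) (hj : j ∈ P c₁) (hne : c₀ ≠ c₁) :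
    #{Z ∈ distributedSampling P τ | {i, j} ⊆ univ.biUnion Z}
      = supersetCount s τ 1 * supersetCount s τ 1
        * supersetCount s τ 0 ^ (Fintype.card κ - 2) := by
  have hnotMem : ∀ {x c c'}, x ∈ P c → c' ≠ c → x ∉ P c' := fun hx hc' =>
    (hdisj hc').notMem_of_mem_right_finset hx
  rw [card_filter_subset_biUnion hcover hdisj hsize,
    Fintype.prod_eq_prod_mul_pow_of_forall_notMem (S := {c₀, c₁}) (a := supersetCount s τ 0),
    prod_pair hne, card_pair hne, insert_inter_of_mem hi,
    singleton_inter_of_notMem (hnotMem hj hne), insert_empty,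
    insert_inter_of_notMem (hnotMem hi hne.symm), singleton_inter_of_mem hj, card_singleton,
    card_singleton]
  intro c hc
  simp only [mem_insert, mem_singleton, not_or] at hc
  rw [insert_inter_of_notMem (hnotMem hi hc.1), singleton_inter_of_notMem (hnotMem hj hc.2),
    card_empty]

theorem exists_sum_filter_mem_biUnion_card_inter_eq (hcover : ∀ x, ∃ c, x ∈ P c)
    (hdisj : Pairwise (Disjoint on P)) (hsize : ∀ c, #(P c) = s) {J : Finset ι} {ξ : ℕ}
    (hξ : ∀ c, #(P c ∩ J) = ξ) :
    ∃ N, ∀ i ∈ J, ∑ Z ∈ distributedSampling P τ with i ∈ univ.biUnion Z,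
      #(univ.biUnion Z ∩ J) = N := by
  set f := supersetCount s τ
  -- contributions of `j = i`, of the other `j` in the part of `i`, and of `j` outside that part
  refine ⟨(f 1 + (ξ - 1) * f 2) * f 0 ^ (Fintype.card κ - 1)
    + (#J - ξ) * (f 1 * f 1 * f 0 ^ (Fintype.card κ - 2)), fun i hi => ?_⟩
  obtain ⟨c₀, hic₀⟩ := hcover i
  have hiJ : i ∈ J ∩ P c₀ := mem_inter.2 ⟨hi, hic₀⟩
  have hξ₀ : #(J ∩ P c₀) = ξ := by rw [inter_comm, hξ]
  have hsame : ∀ j ∈ (J ∩ P c₀).erase i,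
      #{Z ∈ distributedSampling P τ | {i, j} ⊆ univ.biUnion Z}
        = f 2 * f 0 ^ (Fintype.card κ - 1) := by
    intro j hj
    obtain ⟨hji, hj⟩ := mem_erase.1 hj
    rw [card_filter_subset_biUnion_of_subset hcover hdisj hsize
      (insert_subset hic₀ (singleton_subset_iff.2 (mem_inter.1 hj).2)), card_pair hji.symm]
  have hother : ∀ j ∈ {j ∈ J | j ∉ P c₀},
      #{Z ∈ distributedSampling P τ | {i, j} ⊆ univ.biUnion Z}
        = f 1 * f 1 * f 0 ^ (Fintype.card κ - 2) := by
    intro j hj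
    obtain ⟨c₁, hjc₁⟩ := hcover j
    exact card_filter_pair_subset_biUnion_of_ne hcover hdisj hsize hic₀ hjc₁
      (by rintro rfl; exact (mem_filter.1 hj).2 hjc₁)
  have hcard := card_filter_add_card_filter_not (s := J) (· ∈ P c₀)
  rw [sum_filter_mem_card_inter, ← sum_filter_add_sum_filter_not J (· ∈ P c₀),
    filter_mem_eq_inter, ← add_sum_erase _ _ hiJ, pair_eq_singleton,
    card_filter_subset_biUnion_of_subset hcover hdisj hsize (singleton_subset_iff.2 hic₀),
    sum_congr rfl hsame, sum_congr rfl hother, sum_const, sum_const, card_erase_of_mem hiJ, hξ₀,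
    card_singleton, smul_eq_mul, smul_eq_mul]
  rw [filter_mem_eq_inter, hξ₀] at hcard
  rw [← hcard, Nat.add_sub_cancel_left]
  ring

end Sampling

theorem eso_key_estimate_general
    (n C s τ ξ : ℕ) (d : Fin n → ℕ) (L : Fin n → ℝ)
    (φ : (∀ i : Fin n, EuclideanSpace ℝ (Fin (d i))) → ℝ)
    (hconv : ConvexOn ℝ Set.univ φ) (hφ0 : φ 0 = 0) (hφnn : ∀ x, 0 ≤ φ x)
    (hquad : ∀ (i : Fin n) (t : EuclideanSpace ℝ (Fin (d i))),
      φ (Function.update (fun _ => 0) i t) ≤ L i / 2 * ‖t‖ ^ 2)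
    (J : Finset (Fin n))
    (hdep : ∀ x y, (∀ i ∈ J, x i = y i) → φ x = φ y)
    (P : Fin C → Finset (Fin n))
    (hpart : Finset.univ = Finset.univ.biUnion P)
    (hdisj : ∀ c c' : Fin C, c ≠ c' → Disjoint (P c) (P c'))
    (hsize : ∀ c, (P c).card = s)
    (hξ : ∀ c, (P c ∩ J).card = ξ) :
    ∀ h : ∀ i : Fin n, EuclideanSpace ℝ (Fin (d i)),
      (∑ Z ∈ Fintype.piFinset (fun c : Fin C => (P c).powersetCard τ),
          φ (fun i => if i ∈ Finset.univ.biUnion Z then h i else 0))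
        / ((Fintype.piFinset (fun c : Fin C => (P c).powersetCard τ)).card : ℝ)
      ≤ 1 / (2 * (C : ℝ) * ξ)
        * ((∑ Z ∈ Fintype.piFinset (fun c : Fin C => (P c).powersetCard τ),
              (((Finset.univ.biUnion Z ∩ J).card : ℝ)) ^ 2)
            / ((Fintype.piFinset (fun c : Fin C => (P c).powersetCard τ)).card : ℝ))
        * ∑ i : Fin n, L i * ‖h i‖ ^ 2 := by
  intro h
  rw [show Fintype.piFinset (fun c => (P c).powersetCard τ) = distributedSampling P τ from rfl]
  have hcover : ∀ i, ∃ c, i ∈ P c := fun i => by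
    simpa using (show i ∈ univ.biUnion P from hpart ▸ mem_univ i)
  obtain ⟨N, hN⟩ := exists_sum_filter_mem_biUnion_card_inter_eq (τ := τ) hcover hdisj hsize hξ
  have hJ : (#J : ℝ) = C * ξ := by
    exact_mod_cast (card_eq_card_mul_of_card_inter_eq hcover hdisj hξ).trans (by simp)
  have hsq : ∑ Z ∈ distributedSampling P τ, (#(univ.biUnion Z ∩ J) : ℝ) ^ 2 = N * #J := by
    simpa [sq] using sum_card_inter_mul_sum_eq _ _ _ hN fun _ => (1 : ℝ)
  have key : ∑ Z ∈ distributedSampling P τ, φ (fun i => if i ∈ univ.biUnion Z then h i else 0)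
      ≤ 1 / (2 * C * ξ) * (N * #J) * ∑ i, L i * ‖h i‖ ^ 2 := by
    have hφZ := hconv.sum_map_ite_mem_le hφ0 hquad hdep hN h
    rcases J.eq_empty_or_nonempty with rfl | hJne
    · simpa using hφZ
    obtain ⟨hC, hξ0⟩ := mul_ne_zero_iff.1 (hJ ▸ Nat.cast_ne_zero.2 hJne.card_ne_zero)
    calc _ ≤ N / 2 * ∑ i ∈ J, L i * ‖h i‖ ^ 2 := hφZ
      _ ≤ N / 2 * ∑ i, L i * ‖h i‖ ^ 2 := by
          gcongr
          exacts [fun i _ _ => by linarith [hφnn (update (fun _ => 0) i (h i)), hquad i (h i)],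
            subset_univ J]
      _ = _ := by rw [hJ]; field_simp
  rw [hsq, mul_div_assoc', div_mul_eq_mul_div]
  exact div_le_div_of_nonneg_right key (Nat.cast_nonneg _)

/-- Key estimate in the ESO proof.  Let `φ` be convex with `φ(0) = 0`, `φ ≥ 0`, and
`φ(U_i t) ≤ (L i / 2) ‖t‖²` for every block vector `t` (blocks live in `ℝ^(d i)`,
`U_i t = Function.update 0 i t`).  If `φ` depends only on the blocks in `J` and `Ẑ` is a
`(C,τ)`-distributed sampling over a balanced partition `P` of the `n` blocks with
`|P c ∩ J| = ξ ≥ 1` for all `c`, then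
`E[φ(h_[Ẑ])] ≤ (1 / (2 C ξ)) E[|Ẑ ∩ J|²] ‖h‖_L²` with `‖h‖_L² = ∑ i, L i ‖h i‖²`. -/
theorem eso_key_estimate
    (n C s τ ξ : ℕ) (d : Fin n → ℕ) (L : Fin n → ℝ)
    (φ : (∀ i : Fin n, EuclideanSpace ℝ (Fin (d i))) → ℝ)
    (hconv : ConvexOn ℝ Set.univ φ) (hφ0 : φ 0 = 0) (hφnn : ∀ x, 0 ≤ φ x)
    (hquad : ∀ (i : Fin n) (t : EuclideanSpace ℝ (Fin (d i))),
      φ (Function.update (fun _ => 0) i t) ≤ L i / 2 * ‖t‖ ^ 2)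
    (J : Finset (Fin n))
    (hdep : ∀ x y, (∀ i ∈ J, x i = y i) → φ x = φ y)
    (P : Fin C → Finset (Fin n))
    (hpart : Finset.univ = Finset.univ.biUnion P)
    (hdisj : ∀ c c' : Fin C, c ≠ c' → Disjoint (P c) (P c'))
    (hsize : ∀ c, (P c).card = s) (hn : n = C * s)
    (hτ1 : 1 ≤ τ) (hτs : τ ≤ s)
    (hξ : ∀ c, (P c ∩ J).card = ξ) (hξ1 : 1 ≤ ξ) :
    ∀ h : ∀ i : Fin n, EuclideanSpace ℝ (Fin (d i)),
      (∑ Z ∈ Fintype.piFinset (fun c : Fin C => (P c).powersetCard τ),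
          φ (fun i => if i ∈ Finset.univ.biUnion Z then h i else 0))
        / ((Fintype.piFinset (fun c : Fin C => (P c).powersetCard τ)).card : ℝ)
      ≤ 1 / (2 * (C : ℝ) * ξ)
        * ((∑ Z ∈ Fintype.piFinset (fun c : Fin C => (P c).powersetCard τ),
              (((Finset.univ.biUnion Z ∩ J).card : ℝ)) ^ 2)
            / ((Fintype.piFinset (fun c : Fin C => (P c).powersetCard τ)).card : ℝ))
        * ∑ i : Fin n, L i * ‖h i‖ ^ 2 :=
  eso_key_estimate_general n C s τ ξ d L φ hconv hφ0 hφnn hquad J hdep P hpart hdisj hsize hξ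
end

section
/- Let $\beta = 1 + \frac{(\xi-1)(\tau-1)}{\max\{1,s-1\}} + (C-1)\frac{\xi\tau}{s}$ with integers $C \geq 1$, $s \geq 1$, $1 \leq \tau \leq s$, $1 \leq \xi \leq s$, and let $\eta = \xi/s$. Then $\frac{\beta}{C\tau} \leq \frac{1}{C\tau} + \eta\left(1 - \frac{1}{C\tau}\right)$. -/
/-! Multiplying through by `C τ`, the terms in `C` cancel and the claim reduces to
`(ξ - 1)(τ - 1) / max 1 (s - 1) ≤ ξ (τ - 1) / s`, i.e. to `(ξ - 1) / max 1 (s - 1) ≤ ξ / s`,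
which for `s ≥ 2` is `(ξ - 1) s ≤ ξ (s - 1)`, that is `ξ ≤ s`. -/

lemma sub_one_div_max_one_sub_one_le_div {x s : ℝ} (hs : 1 ≤ s) (hxs : x ≤ s) :
    (x - 1) / max 1 (s - 1) ≤ x / s := by
  have hs0 : 0 < s := by linarith
  rcases le_total (s - 1) 1 with hs2 | hs2
  · rw [max_eq_left hs2, div_one, le_div_iff₀ hs0]
    nlinarith
  · rw [max_eq_right hs2, div_le_div_iff₀ (by linarith) hs0]
    nlinarith

/-- The ESO parameter `β` of the paper. -/
noncomputable def esoBeta (C s τ ξ : ℝ) : ℝ :=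
  1 + (ξ - 1) * (τ - 1) / max 1 (s - 1) + (C - 1) * (ξ * τ / s)

lemma esoBeta_div_le {C s τ ξ : ℝ} (hC : 0 < C) (hs : 1 ≤ s) (hτ : 1 ≤ τ) (hξs : ξ ≤ s) :
    esoBeta C s τ ξ / (C * τ) ≤ 1 / (C * τ) + ξ / s * (1 - 1 / (C * τ)) := by
  have hCτ : 0 < C * τ := mul_pos hC (by linarith)
  have hkey : (ξ - 1) * (τ - 1) / max 1 (s - 1) ≤ (τ - 1) * (ξ / s) := by
    rw [mul_comm, mul_div_assoc]
    exact mul_le_mul_of_nonneg_left (sub_one_div_max_one_sub_one_le_div hs hξs) (by linarith)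
  have hrhs : (1 / (C * τ) + ξ / s * (1 - 1 / (C * τ))) * (C * τ)
      = 1 + (C - 1) * (ξ * τ / s) + (τ - 1) * (ξ / s) := by
    field_simp
    ring
  rw [div_le_iff₀ hCτ, hrhs, esoBeta]
  linarith

theorem beta_over_Ctau_bound_general
    (C s τ ξ : ℕ) (hC : 1 ≤ C) (hs : 1 ≤ s) (hτ1 : 1 ≤ τ)
    (hξs : ξ ≤ s) :
    (1 + ((ξ : ℝ) - 1) * ((τ : ℝ) - 1) / max 1 ((s : ℝ) - 1)
        + ((C : ℝ) - 1) * ((ξ : ℝ) * τ / s)) / ((C : ℝ) * τ)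
      ≤ 1 / ((C : ℝ) * τ) + (ξ : ℝ) / s * (1 - 1 / ((C : ℝ) * τ)) :=
  esoBeta_div_le (by exact_mod_cast hC) (by exact_mod_cast hs)
    (by exact_mod_cast hτ1) (by exact_mod_cast hξs)

/-- Bound on the normalized ESO parameter:
`β / (C τ) ≤ 1/(C τ) + η (1 - 1/(C τ))` where `η = ξ / s`. -/
theorem beta_over_Ctau_bound
    (C s τ ξ : ℕ) (hC : 1 ≤ C) (hs : 1 ≤ s) (hτ1 : 1 ≤ τ) (hτs : τ ≤ s)
    (hξ1 : 1 ≤ ξ) (hξs : ξ ≤ s) :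
    (1 + ((ξ : ℝ) - 1) * ((τ : ℝ) - 1) / max 1 ((s : ℝ) - 1)
        + ((C : ℝ) - 1) * ((ξ : ℝ) * τ / s)) / ((C : ℝ) * τ)
      ≤ 1 / ((C : ℝ) * τ) + (ξ : ℝ) / s * (1 - 1 / ((C : ℝ) * τ)) :=
  beta_over_Ctau_bound_general C s τ ξ hC hs hτ1 hξs
end

section
/- Fix integers $n \geq 2$, $2 \leq \omega \leq n$, $C \geq 1$ dividing $n$ with $s = n/C \geq 2$, and $1 \leq \tau \leq s$. Define, for $\xi$ with $\omega/C \leq \xi \leq \omega$, $\beta_1(\xi) = 1 + \frac{(\xi-1)(\tau-1)}{s-1} + (C-1)\frac{\xi\tau}{s}$ and $\beta_2 = 1 + \frac{(\omega-1)(C\tau-1)}{n-1}$. Then $\beta_1(\xi)/\beta_2$ is increasing in $\xi$, and consequently $\frac{1 + \frac{(\omega-C)(\tau-1)}{n-C} + (C-1)\frac{\omega\tau}{n}}{\beta_2} \leq \frac{\beta_1(\xi)}{\beta_2} \leq \frac{1 + \frac{(\omega-1)(C\tau-C)}{n-C} + (C-1)\frac{\omega C\tau}{n}}{\beta_2}$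 (using $\omega/C \leq \xi \leq \omega$). -/
/-!
`β₁` is affine in `ξ` with slope `(τ - 1)/(s - 1) + (C - 1) τ / s ≥ 0`, and `β₂ > 0`, so `β₁ ξ / β₂`
is monotone; the two bounds are `β₁` evaluated at the endpoints `ξ = ω / C` and `ξ = ω`, rewritten
with `s = n / C`.
-/

/-- The ESO parameter `β₁(ξ)` of a `C`-computer distributed sampling with per-part degree `ξ`. -/
noncomputable def esoDistributed (C s τ ξ : ℝ) : ℝ :=
  1 + (ξ - 1) * (τ - 1) / (s - 1) + (C - 1) * (ξ * τ / s)

namespace esoDistributed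

variable {C s τ : ℝ}

theorem monotone (hC : 1 ≤ C) (hs : 1 < s) (hτ : 1 ≤ τ) : Monotone (esoDistributed C s τ) := by
  intro ξa ξb h
  unfold esoDistributed
  have : 0 ≤ τ - 1 := by linarith
  have : 0 < s - 1 := by linarith
  have : 0 ≤ C - 1 := by linarith
  have : 0 ≤ τ := by linarith
  have : 0 < s := by linarith
  gcongr

theorem apply_div (ω : ℝ) (hC : C ≠ 0) (hs₀ : s ≠ 0) (hs₁ : s ≠ 1) :
    esoDistributed C s τ (ω / C) =
      1 + (ω - C) * (τ - 1) / (C * s - C) + (C - 1) * (ω * τ / (C * s)) := by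
  have : s - 1 ≠ 0 := sub_ne_zero.2 hs₁
  have : C * s - C ≠ 0 := by rw [← mul_sub_one]; exact mul_ne_zero hC this
  unfold esoDistributed
  field_simp

theorem apply_eq (ω : ℝ) (hC : C ≠ 0) (hs₀ : s ≠ 0) (hs₁ : s ≠ 1) :
    esoDistributed C s τ ω =
      1 + (ω - 1) * (C * τ - C) / (C * s - C) + (C - 1) * (ω * C * τ / (C * s)) := by
  have : s - 1 ≠ 0 := sub_ne_zero.2 hs₁
  have : C * s - C ≠ 0 := by rw [← mul_sub_one]; exact mul_ne_zero hC this
  unfold esoDistributed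
  field_simp

end esoDistributed

theorem beta_ratio_bounds_general
    (n ω C s τ : ℕ) (hω2 : 2 ≤ ω)
    (hC : 1 ≤ C) (hns : n = C * s) (hs : 2 ≤ s) (hτ1 : 1 ≤ τ) :
    let β₁ : ℝ → ℝ := fun ξ =>
      1 + (ξ - 1) * ((τ : ℝ) - 1) / ((s : ℝ) - 1) + ((C : ℝ) - 1) * (ξ * τ / s)
    let β₂ : ℝ := 1 + ((ω : ℝ) - 1) * ((C : ℝ) * τ - 1) / ((n : ℝ) - 1)
    (∀ ξa ξb : ℝ, (ω : ℝ) / C ≤ ξa → ξa ≤ ξb → ξb ≤ (ω : ℝ) →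
        β₁ ξa / β₂ ≤ β₁ ξb / β₂) ∧
    (∀ ξ : ℝ, (ω : ℝ) / C ≤ ξ → ξ ≤ (ω : ℝ) →
      (1 + ((ω : ℝ) - C) * ((τ : ℝ) - 1) / ((n : ℝ) - C)
          + ((C : ℝ) - 1) * ((ω : ℝ) * τ / n)) / β₂ ≤ β₁ ξ / β₂ ∧
      β₁ ξ / β₂ ≤ (1 + ((ω : ℝ) - 1) * ((C : ℝ) * τ - C) / ((n : ℝ) - C)
          + ((C : ℝ) - 1) * ((ω : ℝ) * C * τ / n)) / β₂) := by
  intro β₁ β₂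
  subst hns
  have hC' : (1 : ℝ) ≤ C := by exact_mod_cast hC
  have hs' : (2 : ℝ) ≤ s := by exact_mod_cast hs
  have hτ' : (1 : ℝ) ≤ τ := by exact_mod_cast hτ1
  have hω' : (2 : ℝ) ≤ ω := by exact_mod_cast hω2
  have hβ₂ : 0 ≤ β₂ := by
    have : (2 : ℝ) ≤ C * s := by nlinarith
    have : (1 : ℝ) ≤ C * τ := by nlinarith
    have : 0 ≤ ((ω : ℝ) - 1) * (C * τ - 1) / (C * s - 1) :=
      div_nonneg (mul_nonneg (by linarith) (by linarith)) (by linarith)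
    simp only [β₂, Nat.cast_mul]
    linarith
  have hmono : Monotone β₁ := esoDistributed.monotone hC' (by linarith) hτ'
  have hC₀ : (C : ℝ) ≠ 0 := by positivity
  have hs₀ : (s : ℝ) ≠ 0 := by positivity
  have hs₁ : (s : ℝ) ≠ 1 := by linarith
  push_cast
  rw [← esoDistributed.apply_div _ hC₀ hs₀ hs₁, ← esoDistributed.apply_eq _ hC₀ hs₀ hs₁]
  exact ⟨fun ξa ξb _ hab _ => div_le_div_of_nonneg_right (hmono hab) hβ₂,
    fun ξ hlo hhi => ⟨div_le_div_of_nonneg_right (hmono hlo) hβ₂,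
      div_le_div_of_nonneg_right (hmono hhi) hβ₂⟩⟩

/-- The ratio `β₁(ξ)/β₂` between the ESO parameter of a `C`-computer distributed sampling
(per-part degree `ξ`) and the ESO parameter of a single computer updating `C τ` blocks is
increasing in `ξ ∈ [ω/C, ω]`, and hence lies between the bounds LB and UB obtained by
substituting `ξ = ω/C` and `ξ = ω`. -/
theorem beta_ratio_bounds
    (n ω C s τ : ℕ) (hn : 2 ≤ n) (hω2 : 2 ≤ ω) (hωn : ω ≤ n)
    (hC : 1 ≤ C) (hns : n = C * s) (hs : 2 ≤ s) (hτ1 : 1 ≤ τ) (hτs : τ ≤ s) :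
    let β₁ : ℝ → ℝ := fun ξ =>
      1 + (ξ - 1) * ((τ : ℝ) - 1) / ((s : ℝ) - 1) + ((C : ℝ) - 1) * (ξ * τ / s)
    let β₂ : ℝ := 1 + ((ω : ℝ) - 1) * ((C : ℝ) * τ - 1) / ((n : ℝ) - 1)
    (∀ ξa ξb : ℝ, (ω : ℝ) / C ≤ ξa → ξa ≤ ξb → ξb ≤ (ω : ℝ) →
        β₁ ξa / β₂ ≤ β₁ ξb / β₂) ∧
    (∀ ξ : ℝ, (ω : ℝ) / C ≤ ξ → ξ ≤ (ω : ℝ) →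
      (1 + ((ω : ℝ) - C) * ((τ : ℝ) - 1) / ((n : ℝ) - C)
          + ((C : ℝ) - 1) * ((ω : ℝ) * τ / n)) / β₂ ≤ β₁ ξ / β₂ ∧
      β₁ ξ / β₂ ≤ (1 + ((ω : ℝ) - 1) * ((C : ℝ) * τ - C) / ((n : ℝ) - C)
          + ((C : ℝ) - 1) * ((ω : ℝ) * C * τ / n)) / β₂) :=
  beta_ratio_bounds_general n ω C s τ hω2 hC hns hs hτ1
end
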